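/- arXiv:0907.1572 — 2 statements merged into one kernel-verified Lean document; each statement's English description precedes it below -/
import Mathlib

section
/- There is an absolute constant C such that for every M ∈ ℝ and 0 < a < b, 2∫_ℝ Ψ(|v|/√(b−a)) e^{−(M+v)²/(2a)}/√(2πa) dv ≤ C · min(1, √((b−a)/a) · e^{−M²/(8·max(a, b−a))}), where Ψ(x) = ∫_x^∞ e^{−u²/2} du/√(2π). -/
open MeasureTheory ProbabilityTheory Real Set

/-- A standard one-dimensional Brownian motion on `[0,∞)`:
almost surely starts at `0`, has a.s. continuous paths, Gaussian
increments of the right variance, and independent increments. -/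
structure IsStdBrownianMotion {Ω : Type*} [MeasurableSpace Ω]
    (P : Measure Ω) (W : ℝ → Ω → ℝ) : Prop where
  isProb : IsProbabilityMeasure P
  meas : ∀ t, Measurable (W t)
  init : ∀ᵐ ω ∂P, W 0 ω = 0
  cont : ∀ᵐ ω ∂P, Continuous fun t => W t ω
  gauss : ∀ s t : ℝ, 0 ≤ s → s ≤ t →
    Measure.map (fun ω => W t ω - W s ω) P = gaussianReal 0 (t - s).toNNReal
  indep : ∀ (n : ℕ) (t : Fin (n + 1) → ℝ), (∀ i, 0 ≤ t i) → Monotone t →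
    iIndepFun
      (fun (i : Fin n) ω => W (t i.succ) ω - W (t i.castSucc) ω) P

/-- The upper tail of the standard Gaussian distribution. -/
noncomputable def gaussTail (x : ℝ) : ℝ :=
  ∫ u in Set.Ioi x, Real.exp (-u ^ 2 / 2) / Real.sqrt (2 * Real.pi)

/-! Since `Ψ(x) ≤ e^{-x²/2}/2` for `x ≥ 0`, the integrand is dominated by half the product of
two centred Gaussian densities, with variances `c = b - a` and `a`. Completing the square, their
convolution integrates to `√(c/(a+c)) e^{-M²/(2(a+c))} = √((b-a)/b) e^{-M²/(2b)}`, which is at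
most `1` and at most `√((b-a)/a) e^{-M²/(8 max(a, b-a))}` because `2b ≤ 8 max(a, b-a)`. -/

lemma gaussTail_nonneg (x : ℝ) : 0 ≤ gaussTail x :=
  setIntegral_nonneg measurableSet_Ioi fun u _ => by positivity

lemma setIntegral_Ioi_comp_sub (g : ℝ → ℝ) (x : ℝ) :
    ∫ u in Ioi x, g (u - x) = ∫ u in Ioi (0 : ℝ), g u := by
  rw [← integral_indicator measurableSet_Ioi, ← integral_indicator measurableSet_Ioi,
    ← integral_sub_right_eq_self (fun u => (Ioi (0 : ℝ)).indicator g u) x]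
  congr 1
  funext u
  by_cases h : x < u <;> simp [indicator, mem_Ioi, sub_pos, h]

lemma integral_Ioi_exp_neg_sq_div_two :
    ∫ u in Ioi (0 : ℝ), exp (-u ^ 2 / 2) = √(2 * π) / 2 := by
  have h := integral_gaussian_Ioi (1 / 2)
  rw [show π / (1 / 2) = 2 * π by ring] at h
  simpa only [neg_div, neg_mul, one_div, inv_mul_eq_div] using h

/-- For `u ≥ x ≥ 0` one has `u² ≥ x² + (u - x)²`, so `Ψ(x)` is at most `e^{-x²/2}` times
`Ψ(0) = 1/2`. -/
lemma gaussTail_le_exp_div_two {x : ℝ} (hx : 0 ≤ x) : gaussTail x ≤ exp (-x ^ 2 / 2) / 2 := by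
  have hhalf : (0 : ℝ) < 1 / 2 := by norm_num
  have hint : Integrable fun u : ℝ => exp (-u ^ 2 / 2) / √(2 * π) := by
    convert (integrable_exp_neg_mul_sq hhalf).div_const √(2 * π) using 4; ring
  have hint_shift : Integrable fun u : ℝ => exp (-x ^ 2 / 2) * exp (-(u - x) ^ 2 / 2) / √(2 * π) := by
    convert (((integrable_exp_neg_mul_sq hhalf).comp_sub_right x).const_mul
      (exp (-x ^ 2 / 2))).div_const √(2 * π) using 5; ring
  have hpointwise : ∀ u ∈ Ioi x, exp (-u ^ 2 / 2) / √(2 * π) ≤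
      exp (-x ^ 2 / 2) * exp (-(u - x) ^ 2 / 2) / √(2 * π) := by
    intro u hu
    rw [← exp_add]
    gcongr
    nlinarith [mem_Ioi.1 hu]
  calc gaussTail x
      ≤ ∫ u in Ioi x, exp (-x ^ 2 / 2) * exp (-(u - x) ^ 2 / 2) / √(2 * π) :=
        setIntegral_mono_on hint.integrableOn hint_shift.integrableOn measurableSet_Ioi hpointwise
    _ = exp (-x ^ 2 / 2) / √(2 * π) * ∫ u in Ioi x, exp (-(u - x) ^ 2 / 2) := by
        rw [← integral_const_mul]
        congr 1; funext u; ring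
    _ = exp (-x ^ 2 / 2) / 2 := by
        rw [setIntegral_Ioi_comp_sub (fun t => exp (-t ^ 2 / 2)), integral_Ioi_exp_neg_sq_div_two]
        field_simp

section GaussianProduct

variable {a c : ℝ} (ha : 0 < a) (hc : 0 < c) (M : ℝ)
include ha hc

lemma exp_mul_exp_eq_exp_mul_exp_sq (v : ℝ) :
    exp (-v ^ 2 / (2 * c)) * exp (-(M + v) ^ 2 / (2 * a)) =
      exp (-M ^ 2 / (2 * (a + c))) *
        exp (-((a + c) / (2 * a * c)) * (v + M * c / (a + c)) ^ 2) := by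
  rw [← exp_add, ← exp_add]
  congr 1
  field_simp
  ring

lemma integrable_exp_mul_exp :
    Integrable fun v : ℝ => exp (-v ^ 2 / (2 * c)) * exp (-(M + v) ^ 2 / (2 * a)) := by
  simp_rw [exp_mul_exp_eq_exp_mul_exp_sq ha hc M]
  exact ((integrable_exp_neg_mul_sq (by positivity)).comp_add_right _).const_mul _

lemma integral_exp_mul_exp :
    ∫ v : ℝ, exp (-v ^ 2 / (2 * c)) * exp (-(M + v) ^ 2 / (2 * a)) =
      √(2 * π * a * c / (a + c)) * exp (-M ^ 2 / (2 * (a + c))) := by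
  simp_rw [exp_mul_exp_eq_exp_mul_exp_sq ha hc M]
  rw [integral_const_mul,
    integral_add_right_eq_self (fun v : ℝ => exp (-((a + c) / (2 * a * c)) * v ^ 2)),
    integral_gaussian, mul_comm]
  congr 2
  field_simp

end GaussianProduct

lemma sqrt_div_mul_exp_le_min {a c : ℝ} (ha : 0 < a) (hc : 0 < c) (M : ℝ) :
    √(c / (a + c)) * exp (-M ^ 2 / (2 * (a + c))) ≤
      min 1 (√(c / a) * exp (-M ^ 2 / (8 * max a c))) := by
  have hexp_le_one : exp (-M ^ 2 / (2 * (a + c))) ≤ 1 :=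
    exp_le_one_iff.2 (div_nonpos_of_nonpos_of_nonneg (by nlinarith) (by positivity))
  refine le_min ?_ ?_
  · have hsqrt : √(c / (a + c)) ≤ 1 := sqrt_le_one.2 ((div_le_one (by positivity)).2 (by linarith))
    exact mul_le_one₀ hsqrt (exp_nonneg _) hexp_le_one
  · have hsqrt : √(c / (a + c)) ≤ √(c / a) := sqrt_le_sqrt (by gcongr; linarith)
    have hmax : 2 * (a + c) ≤ 8 * max a c := by
      linarith [le_max_left a c, le_max_right a c]
    have hexp : exp (-M ^ 2 / (2 * (a + c))) ≤ exp (-M ^ 2 / (8 * max a c)) := by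
      rw [exp_le_exp, neg_div, neg_div, neg_le_neg_iff]
      gcongr
    exact mul_le_mul hsqrt hexp (exp_nonneg _) (sqrt_nonneg _)

lemma gaussTail_mul_le {c : ℝ} (hc : 0 < c) (a M v : ℝ) :
    gaussTail (|v| / √c) * (exp (-(M + v) ^ 2 / (2 * a)) / √(2 * π * a)) ≤
      (2 * √(2 * π * a))⁻¹ * (exp (-v ^ 2 / (2 * c)) * exp (-(M + v) ^ 2 / (2 * a))) := by
  have htail : gaussTail (|v| / √c) ≤ exp (-v ^ 2 / (2 * c)) / 2 := by
    convert gaussTail_le_exp_div_two (x := |v| / √c) (by positivity) using 3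
    rw [div_pow, sq_abs, sq_sqrt hc.le]
    ring
  calc _ ≤ exp (-v ^ 2 / (2 * c)) / 2 * (exp (-(M + v) ^ 2 / (2 * a)) / √(2 * π * a)) := by
        gcongr
    _ = _ := by ring

lemma two_mul_integral_gaussTail_mul_le {a c : ℝ} (ha : 0 < a) (hc : 0 < c) (M : ℝ) :
    2 * ∫ v : ℝ, gaussTail (|v| / √c) * (exp (-(M + v) ^ 2 / (2 * a)) / √(2 * π * a)) ≤
      √(c / (a + c)) * exp (-M ^ 2 / (2 * (a + c))) := by
  have hle := integral_mono_of_nonneg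
    (ae_of_all _ fun v => mul_nonneg (gaussTail_nonneg _) (by positivity))
    ((integrable_exp_mul_exp ha hc M).const_mul _) (ae_of_all _ (gaussTail_mul_le hc a M))
  rw [integral_const_mul, integral_exp_mul_exp ha hc M] at hle
  have hvalue : 2 * ((2 * √(2 * π * a))⁻¹ * (√(2 * π * a * c / (a + c)) *
      exp (-M ^ 2 / (2 * (a + c))))) = √(c / (a + c)) * exp (-M ^ 2 / (2 * (a + c))) := by
    rw [show 2 * π * a * c / (a + c) = 2 * π * a * (c / (a + c)) by ring,
      sqrt_mul (x := 2 * π * a) (by positivity)]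
    have hs : √(2 * π * a) ≠ 0 := by positivity
    generalize √(2 * π * a) = s at hs ⊢
    field_simp
  linarith

theorem stmt7 :
    ∃ C : ℝ, 0 < C ∧ ∀ (M : ℝ) (a b : ℝ), 0 < a → a < b →
      2 * ∫ v : ℝ,
          gaussTail (|v| / Real.sqrt (b - a)) *
            (Real.exp (-(M + v) ^ 2 / (2 * a)) / Real.sqrt (2 * Real.pi * a)) ≤
        C * min 1 (Real.sqrt ((b - a) / a) *
          Real.exp (-M ^ 2 / (8 * max a (b - a)))) := by
  refine ⟨1, one_pos, fun M a b ha hab => ?_⟩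
  have hc : 0 < b - a := sub_pos.2 hab
  rw [one_mul]
  exact (two_mul_integral_gaussTail_mul_le ha hc M).trans (sqrt_div_mul_exp_le_min ha hc M)
end

section
/- There is an absolute constant C such that for every M ∈ ℝ and 0 < a < b, a standard Brownian motion W satisfies P(∃ t ∈ [a,b], W(t) = M) ≤ C · min(1, √((b−a)/a)). -/
/-!
Put `ε = √(b - a)` and discretize `[a, b]` by dyadic grids `a = t₀ ≤ … ≤ t_N = b`. If the path
comes within `ε` of `M` at a grid time, let `t_k` be the first one. The increment `W b - W t_k`
has variance at most `ε²`, so with probability at least `1/3`, independently of the path up to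
`t_k`, it is at most `ε` in absolute value, and then `W b - W 0` lies within `2ε` of `M`. Hence
coming `ε`-close to `M` on the grid has probability at most `3 P(|W b - W 0 - M| ≤ 2ε)`, which
is `≤ 12 ε / √(2π b)`. As the grids become dense, continuity of the paths gives the same bound
for hitting `M` in `[a, b]`, and `12 / √(2π) ≤ 5`.
-/

open MeasureTheory ProbabilityTheory Real Set

open scoped ENNReal NNReal

lemma gaussianPDFReal_le_inv_sqrt (μ : ℝ) (v : ℝ≥0) (x : ℝ) :
    gaussianPDFReal μ v x ≤ (√(2 * π * v))⁻¹ := by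
  rw [gaussianPDFReal]
  refine mul_le_of_le_one_right (by positivity) (exp_le_one_iff.2 ?_)
  exact div_nonpos_of_nonpos_of_nonneg (neg_nonpos.2 (sq_nonneg _)) (by positivity)

lemma gaussianReal_le_mul_volume (μ : ℝ) {v : ℝ≥0} (hv : v ≠ 0) (s : Set ℝ) :
    gaussianReal μ v s ≤ ENNReal.ofReal (√(2 * π * v))⁻¹ * volume s := by
  rw [gaussianReal_apply μ hv, ← setLIntegral_const]
  exact lintegral_mono fun x ↦ ENNReal.ofReal_le_ofReal (gaussianPDFReal_le_inv_sqrt μ v x)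

lemma inv_three_le_gaussianReal_Icc (μ : ℝ) {v : ℝ≥0} {ε : ℝ} (hε : √v ≤ ε) :
    (3 : ℝ≥0∞)⁻¹ ≤ gaussianReal μ v (Icc (μ - ε) (μ + ε)) := by
  rcases eq_or_ne v 0 with rfl | hv
  · have hμ : μ ∈ Icc (μ - ε) (μ + ε) := by
      constructor <;> linarith [show (0 : ℝ) ≤ ε by simpa using hε]
    simp [gaussianReal_zero_var, Measure.dirac_apply' _ measurableSet_Icc, hμ]
  have hsv : 0 < √(v : ℝ) := Real.sqrt_pos.2 (by positivity)
  have hpdf : ∀ x ∈ Icc (μ - √v) (μ + √v),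
      ENNReal.ofReal ((√(2 * π * v))⁻¹ * exp (-2⁻¹)) ≤ gaussianPDF μ v x := by
    intro x hx
    refine ENNReal.ofReal_le_ofReal (mul_le_mul_of_nonneg_left (exp_le_exp.2 ?_) (by positivity))
    have hx' : (x - μ) ^ 2 ≤ v := calc
      (x - μ) ^ 2 ≤ √v ^ 2 := sq_le_sq' (by linarith [hx.1]) (by linarith [hx.2])
      _ = v := Real.sq_sqrt v.2
    rw [neg_div, neg_le_neg_iff, div_le_iff₀ (by positivity)]
    linarith
  have hconst : (3 : ℝ≥0∞)⁻¹ ≤ ENNReal.ofReal ((√(2 * π * v))⁻¹ * exp (-2⁻¹)) *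
      volume (Icc (μ - √v) (μ + √v)) := by
    rw [Real.volume_Icc, ← ENNReal.ofReal_mul (by positivity), ← ENNReal.ofReal_ofNat 3,
      ← ENNReal.ofReal_inv_of_pos (by norm_num)]
    refine ENNReal.ofReal_le_ofReal ?_
    have hsqrt : √(2 * π * v) = √(2 * π) * √v := Real.sqrt_mul (by positivity) _
    have hpi : √(2 * π) ≤ 3 := Real.sqrt_le_iff.2 ⟨by norm_num, by nlinarith [pi_lt_four]⟩
    have he : exp 2⁻¹ ≤ 2 := by
      have : exp 2⁻¹ ^ 2 = exp 1 := by rw [← exp_nat_mul]; norm_num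
      nlinarith [exp_one_lt_d9, exp_pos 2⁻¹]
    have hval : (√(2 * π * v))⁻¹ * exp (-2⁻¹) * (μ + √v - (μ - √v)) = 2 / (√(2 * π) * exp 2⁻¹) := by
      rw [hsqrt, exp_neg]
      field_simp
      ring
    rw [hval, le_div_iff₀ (by positivity)]
    nlinarith [exp_pos 2⁻¹, Real.sqrt_nonneg (2 * π)]
  calc (3 : ℝ≥0∞)⁻¹
      ≤ ENNReal.ofReal ((√(2 * π * v))⁻¹ * exp (-2⁻¹)) * volume (Icc (μ - √v) (μ + √v)) := hconst
    _ = ∫⁻ _ in Icc (μ - √v) (μ + √v), ENNReal.ofReal ((√(2 * π * v))⁻¹ * exp (-2⁻¹)) :=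
        (setLIntegral_const _ _).symm
    _ ≤ ∫⁻ x in Icc (μ - √v) (μ + √v), gaussianPDF μ v x :=
        setLIntegral_mono (measurable_gaussianPDF μ v) hpdf
    _ ≤ ∫⁻ x in Icc (μ - ε) (μ + ε), gaussianPDF μ v x :=
        lintegral_mono_set (Icc_subset_Icc (by linarith) (by linarith))
    _ = gaussianReal μ v (Icc (μ - ε) (μ + ε)) := (gaussianReal_apply μ hv _).symm

section FirstEntrance

variable {Ω β γ : Type*} [MeasurableSpace Ω] [MeasurableSpace β] [MeasurableSpace γ]
  {μ : Measure Ω}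

-- Split according to the first index `k` with `X k ∈ A`: that event is determined by
-- `X 0, …, X k`, hence independent of `Y k`.
lemma mul_measure_biUnion_le_of_indepFun {X : ℕ → Ω → β} {Y : ℕ → Ω → γ} {A : Set β}
    {I : Set γ} {D : Set Ω} {N : ℕ} {c : ℝ≥0∞} (hX : ∀ k, Measurable (X k))
    (hY : ∀ k, Measurable (Y k)) (hA : MeasurableSet A) (hI : MeasurableSet I)
    (hXY : ∀ k ≤ N, IndepFun (fun ω (j : Fin (k + 1)) ↦ X j ω) (Y k) μ)
    (hc : ∀ k ≤ N, c ≤ μ (Y k ⁻¹' I)) (hD : ∀ k ≤ N, X k ⁻¹' A ∩ Y k ⁻¹' I ⊆ D) :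
    c * μ (⋃ k ∈ Finset.Iic N, X k ⁻¹' A) ≤ μ D := by
  set B := disjointed fun k ↦ X k ⁻¹' A
  have hB_meas : ∀ k, MeasurableSet (B k) :=
    MeasurableSet.disjointed fun k ↦ hX k hA
  have hB_past : ∀ k, MeasurableSet[MeasurableSpace.comap (fun ω (j : Fin (k + 1)) ↦ X j ω)
      inferInstance] (B k) := by
    intro k
    have hXj : ∀ j ≤ k, MeasurableSet[MeasurableSpace.comap (fun ω (j : Fin (k + 1)) ↦ X j ω)
        inferInstance] (X j ⁻¹' A) := fun j hj ↦
      ⟨_, measurable_pi_apply (⟨j, by omega⟩ : Fin (k + 1)) hA, rfl⟩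
    rw [show B k = _ from disjointed_eq_inter_compl _ k]
    exact (hXj k le_rfl).inter
      (MeasurableSet.iInter fun j ↦ MeasurableSet.iInter fun hj ↦ (hXj j hj.le).compl)
  have hBI_meas : ∀ k, MeasurableSet (B k ∩ Y k ⁻¹' I) := fun k ↦ (hB_meas k).inter (hY k hI)
  have hB_disj : (Finset.Iic N : Set ℕ).PairwiseDisjoint B :=
    (disjoint_disjointed _).set_pairwise _
  have hBI_disj : (Finset.Iic N : Set ℕ).PairwiseDisjoint fun k ↦ B k ∩ Y k ⁻¹' I :=
    hB_disj.mono fun k ↦ inter_subset_left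
  have hB_union : ⋃ k ∈ Finset.Iic N, B k = ⋃ k ∈ Finset.Iic N, X k ⁻¹' A := by
    rw [biUnion_Iic_disjointed, partialSups_eq_biSup]
    simp only [Finset.mem_Iic, iSup_eq_iUnion]
  calc c * μ (⋃ k ∈ Finset.Iic N, X k ⁻¹' A)
      = ∑ k ∈ Finset.Iic N, μ (B k) * c := by
        rw [← hB_union, measure_biUnion_finset hB_disj fun k _ ↦ hB_meas k, Finset.mul_sum]
        simp_rw [mul_comm c]
    _ ≤ ∑ k ∈ Finset.Iic N, μ (B k) * μ (Y k ⁻¹' I) :=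
        Finset.sum_le_sum fun k hk ↦ by gcongr; exact hc k (Finset.mem_Iic.1 hk)
    _ = ∑ k ∈ Finset.Iic N, μ (B k ∩ Y k ⁻¹' I) :=
        Finset.sum_congr rfl fun k hk ↦
          ((hXY k (Finset.mem_Iic.1 hk)).meas_inter (hB_past k) ⟨I, hI, rfl⟩).symm
    _ = μ (⋃ k ∈ Finset.Iic N, B k ∩ Y k ⁻¹' I) :=
        (measure_biUnion_finset hBI_disj fun k _ ↦ hBI_meas k).symm
    _ ≤ μ D := measure_mono <| iUnion₂_subset fun k hk ↦
        (inter_subset_inter_left _ (disjointed_subset _ k)).trans (hD k (Finset.mem_Iic.1 hk))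

end FirstEntrance

noncomputable def dyadicPoint (a b : ℝ) (n k : ℕ) : ℝ := a + k * ((b - a) / 2 ^ n)

section DyadicPoint

variable {a b : ℝ}

lemma dyadicPoint_two_pow (a b : ℝ) (n : ℕ) : dyadicPoint a b n (2 ^ n) = b := by
  simp only [dyadicPoint, Nat.cast_pow, Nat.cast_ofNat]
  field_simp
  ring

lemma dyadicPoint_succ_two_mul (a b : ℝ) (n k : ℕ) :
    dyadicPoint a b (n + 1) (2 * k) = dyadicPoint a b n k := by
  simp only [dyadicPoint, pow_succ]
  push_cast
  field_simp

lemma le_dyadicPoint (hab : a ≤ b) (n k : ℕ) : a ≤ dyadicPoint a b n k :=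
  le_add_of_nonneg_right (mul_nonneg k.cast_nonneg (div_nonneg (sub_nonneg.2 hab) (by positivity)))

lemma monotone_dyadicPoint (hab : a ≤ b) (n : ℕ) : Monotone (dyadicPoint a b n) :=
  fun i j hij ↦ by
    have : 0 ≤ (b - a) / 2 ^ n := div_nonneg (sub_nonneg.2 hab) (by positivity)
    simp only [dyadicPoint]
    gcongr

lemma exists_dyadicPoint_near (hab : a < b) {t δ : ℝ} (ht : t ∈ Icc a b) (hδ : 0 < δ) :
    ∃ n, ∃ k ≤ 2 ^ n, |dyadicPoint a b n k - t| < δ := by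
  obtain ⟨n, hn⟩ := pow_unbounded_of_one_lt ((b - a) / δ) one_lt_two
  set h := (b - a) / 2 ^ n
  have hh : 0 < h := div_pos (sub_pos.2 hab) (by positivity)
  have hhδ : h < δ := by
    rw [div_lt_iff₀ hδ] at hn
    rwa [div_lt_iff₀ (by positivity), mul_comm]
  set k := ⌊(t - a) / h⌋₊
  have hk_le : (k : ℝ) * h ≤ t - a :=
    (le_div_iff₀ hh).1 (Nat.floor_le (div_nonneg (sub_nonneg.2 ht.1) hh.le))
  have hk_lt : t - a < (k + 1) * h := (div_lt_iff₀ hh).1 (Nat.lt_floor_add_one _)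
  refine ⟨n, k, ?_, ?_⟩
  · refine Nat.floor_le_of_le ?_
    rw [div_le_iff₀ hh]
    simp only [h]
    push_cast
    field_simp
    linarith [ht.2]
  · rw [abs_lt]
    constructor <;> simp only [dyadicPoint] <;> nlinarith

namespace IsStdBrownianMotion

variable {Ω : Type*} [MeasurableSpace Ω] {P : Measure Ω} {W : ℝ → Ω → ℝ}

lemma measure_sub_mem (hW : IsStdBrownianMotion P W) {s t : ℝ} (hs : 0 ≤ s) (hst : s ≤ t)
    {S : Set ℝ} (hS : MeasurableSet S) :
    P {ω | W t ω - W s ω ∈ S} = gaussianReal 0 (t - s).toNNReal S := by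
  rw [← hW.gauss s t hs hst, Measure.map_apply (f := fun ω ↦ W t ω - W s ω)
    ((hW.meas t).sub (hW.meas s)) hS]
  rfl

lemma measure_sub_mem_Icc_le (hW : IsStdBrownianMotion P W) {s t : ℝ} (hs : 0 ≤ s) (hst : s < t)
    (c d : ℝ) :
    P {ω | W t ω - W s ω ∈ Icc c d} ≤ ENNReal.ofReal ((√(2 * π * (t - s)))⁻¹ * (d - c)) := by
  rw [hW.measure_sub_mem hs hst.le measurableSet_Icc]
  refine (gaussianReal_le_mul_volume 0 (by simpa using hst) _).trans_eq ?_
  rw [Real.volume_Icc, ← ENNReal.ofReal_mul (by positivity), Real.coe_toNNReal _ (sub_pos.2 hst).le]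
lemma indepFun_sub_zero_increment (hW : IsStdBrownianMotion P W) {r : ℕ → ℝ} (hr0 : 0 ≤ r 0)
    (hr : Monotone r) {m n : ℕ} (hmn : m ≤ n) :
    IndepFun (fun ω (j : Fin (m + 1)) ↦ W (r j) ω - W 0 ω) (fun ω ↦ W (r n) ω - W (r m) ω) P := by
  -- prepend the time `0` to the grid
  set ρ : ℕ → ℝ := fun i ↦ if i = 0 then 0 else r (i - 1) with hρ
  have hρ_nonneg : ∀ i, 0 ≤ ρ i := fun i ↦ by
    simp only [hρ]; split_ifs
    exacts [le_rfl, hr0.trans (hr (Nat.zero_le _))]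
  have hρ_mono : Monotone ρ := fun i j hij ↦ by
    simp only [hρ]
    split_ifs
    exacts [le_rfl, hr0.trans (hr (Nat.zero_le _)), by omega, hr (by omega)]
  set Y : Fin (n + 1) → Ω → ℝ := fun i ω ↦ W (ρ (i + 1)) ω - W (ρ i) ω
  have hY_meas : ∀ i, Measurable (Y i) := fun i ↦ (hW.meas _).sub (hW.meas _)
  have hY_indep : iIndepFun Y P :=
    hW.indep (n + 1) (fun i ↦ ρ i) (fun i ↦ hρ_nonneg i) (fun i j hij ↦ hρ_mono hij)
  set past : Set (Fin (n + 1)) := {i | (i : ℕ) ≤ m}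
  set future : Set (Fin (n + 1)) := {i | m < (i : ℕ)}
  have hdisj : Disjoint past future :=
    Set.disjoint_left.2 fun i (hi : (i : ℕ) ≤ m) (hi' : m < i) ↦ absurd hi (not_le.2 hi')
  have hindep := indep_iSup_of_disjoint (fun i ↦ (hY_meas i).comap_le) hY_indep.iIndep hdisj
  -- an increment of `W` along the grid is a sum of the `Y i` over the indices it spans
  have hsum_meas : ∀ {S : Set (Fin (n + 1))} {p q : ℕ}, p ≤ q → q ≤ n + 1 →
      (∀ i : Fin (n + 1), p ≤ i → (i : ℕ) < q → i ∈ S) →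
      Measurable[⨆ i ∈ S, MeasurableSpace.comap (Y i) inferInstance]
        (fun ω ↦ W (ρ q) ω - W (ρ p) ω) := by
    intro S p q hpq hq hS
    have hsum : (fun ω ↦ W (ρ q) ω - W (ρ p) ω) =
        fun ω ↦ ∑ i ∈ Finset.Ico p q, (W (ρ (i + 1)) ω - W (ρ i) ω) := by
      funext ω
      rw [Finset.sum_Ico_sub (fun i ↦ W (ρ i) ω) hpq]
    rw [hsum]
    refine Finset.measurable_sum _ fun i hi ↦ ?_
    obtain ⟨hpi, hiq⟩ := Finset.mem_Ico.1 hi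
    have hi' : i < n + 1 := hiq.trans_le hq
    exact measurable_iff_comap_le.2
      (le_iSup₂ (f := fun j (_ : j ∈ S) ↦ MeasurableSpace.comap (Y j) inferInstance)
        (⟨i, hi'⟩ : Fin (n + 1)) (hS ⟨i, hi'⟩ hpi hiq))
  have hpast : Measurable[⨆ i ∈ past, MeasurableSpace.comap (Y i) inferInstance]
      (fun ω (j : Fin (m + 1)) ↦ W (r j) ω - W 0 ω) := by
    refine @measurable_pi_lambda _ _ _ (⨆ i ∈ past, _) _ _ fun j ↦ ?_
    have := hsum_meas (S := past) (p := 0) (q := j + 1) (Nat.zero_le _) (by omega)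
      (fun i _ hi ↦ show (i : ℕ) ≤ m by omega)
    simpa [hρ] using this
  have hfuture : Measurable[⨆ i ∈ future, MeasurableSpace.comap (Y i) inferInstance]
      (fun ω ↦ W (r n) ω - W (r m) ω) := by
    have := hsum_meas (S := future) (p := m + 1) (q := n + 1) (by omega) le_rfl
      (fun i hi _ ↦ show m < (i : ℕ) by omega)
    simpa [hρ] using this
  exact (IndepFun_iff_Indep _ _ _).2
    (indep_of_indep_of_le_right (indep_of_indep_of_le_left hindep hpast.comap_le) hfuture.comap_le)

lemma inv_three_mul_measure_dyadic_le (hW : IsStdBrownianMotion P W) {M a b ε : ℝ} (ha : 0 ≤ a)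
    (hab : a ≤ b) (hε : √(b - a) ≤ ε) (n : ℕ) :
    (3 : ℝ≥0∞)⁻¹ * P (⋃ k ∈ Finset.Iic (2 ^ n),
      {ω | W (dyadicPoint a b n k) ω - W 0 ω ∈ Icc (M - ε) (M + ε)}) ≤
      P {ω | W b ω - W 0 ω ∈ Icc (M - 2 * ε) (M + 2 * ε)} := by
  set t := dyadicPoint a b n
  have ht_mono : Monotone t := monotone_dyadicPoint hab n
  have ht_last : t (2 ^ n) = b := dyadicPoint_two_pow a b n
  refine mul_measure_biUnion_le_of_indepFun (X := fun k ω ↦ W (t k) ω - W 0 ω)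
    (Y := fun k ω ↦ W b ω - W (t k) ω) (I := Icc (-ε) ε)
    (fun k ↦ (hW.meas _).sub (hW.meas _)) (fun k ↦ (hW.meas _).sub (hW.meas _))
    measurableSet_Icc measurableSet_Icc (fun k hk ↦ ?_) (fun k hk ↦ ?_) ?_
  · rw [← ht_last]
    exact hW.indepFun_sub_zero_increment (ha.trans (le_dyadicPoint hab n 0)) ht_mono hk
  · have htk : t k ≤ b := ht_last ▸ ht_mono hk
    have hv : √((b - t k).toNNReal : ℝ) ≤ ε := by
      rw [Real.coe_toNNReal _ (sub_nonneg.2 htk)]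
      exact (Real.sqrt_le_sqrt (by linarith [le_dyadicPoint hab n k])).trans hε
    have := inv_three_le_gaussianReal_Icc 0 hv
    rwa [zero_sub, zero_add, ← hW.measure_sub_mem (ha.trans (le_dyadicPoint hab n k)) htk
      measurableSet_Icc] at this
  · rintro k - ω ⟨hX, hY⟩
    simp only [mem_preimage, mem_Icc, mem_ofPred_eq] at hX hY ⊢
    constructor <;> linarith

lemma inv_three_mul_measure_exists_eq_le (hW : IsStdBrownianMotion P W) {M a b ε : ℝ}
    (ha : 0 ≤ a) (hab : a < b) (hε : √(b - a) ≤ ε) :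
    (3 : ℝ≥0∞)⁻¹ * P {ω | ∃ t ∈ Icc a b, W t ω = M} ≤
      P {ω | W b ω - W 0 ω ∈ Icc (M - 2 * ε) (M + 2 * ε)} := by
  set G : ℕ → Set Ω := fun n ↦ ⋃ k ∈ Finset.Iic (2 ^ n),
    {ω | W (dyadicPoint a b n k) ω - W 0 ω ∈ Icc (M - ε) (M + ε)}
  have hG_mono : Monotone G := monotone_nat_of_le_succ fun n ω hω ↦ by
    simp only [G, mem_iUnion, Finset.mem_Iic, mem_ofPred_eq] at hω ⊢
    obtain ⟨k, hk, hωk⟩ := hω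
    exact ⟨2 * k, by rw [pow_succ]; omega, by rwa [dyadicPoint_succ_two_mul]⟩
  have hε_pos : 0 < ε := (Real.sqrt_pos.2 (sub_pos.2 hab)).trans_le hε
  have hcover : {ω | ∃ t ∈ Icc a b, W t ω = M} ≤ᵐ[P] ⋃ n, G n := by
    filter_upwards [hW.init, hW.cont] with ω h0 hcont ⟨t, ht, hWt⟩
    obtain ⟨δ, hδ, hδε⟩ := Metric.continuous_iff.1 hcont t ε hε_pos
    obtain ⟨n, k, hk, hnear⟩ := exists_dyadicPoint_near hab ht hδ
    have hclose := hδε _ (by rwa [Real.dist_eq])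
    rw [Real.dist_eq, hWt, abs_lt] at hclose
    show ω ∈ ⋃ n, G n
    simp only [G, mem_iUnion, Finset.mem_Iic, mem_ofPred_eq, h0, sub_zero]
    exact ⟨n, k, hk, by constructor <;> linarith [hclose.1, hclose.2]⟩
  calc (3 : ℝ≥0∞)⁻¹ * P {ω | ∃ t ∈ Icc a b, W t ω = M}
      ≤ (3 : ℝ≥0∞)⁻¹ * P (⋃ n, G n) :=
        mul_le_mul_right (measure_mono_ae hcover) _
    _ = ⨆ n, (3 : ℝ≥0∞)⁻¹ * P (G n) := by rw [hG_mono.measure_iUnion, ENNReal.mul_iSup]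
    _ ≤ _ := iSup_le fun n ↦ hW.inv_three_mul_measure_dyadic_le ha hab.le hε n

end IsStdBrownianMotion

theorem stmt8 {Ω : Type*} [MeasurableSpace Ω] (P : Measure Ω) (W : ℝ → Ω → ℝ)
    (hW : IsStdBrownianMotion P W) :
    ∃ C : ℝ, 0 < C ∧ ∀ (M : ℝ) (a b : ℝ), 0 < a → a < b →
      (P {ω | ∃ t ∈ Set.Icc a b, W t ω = M}).toReal ≤
        C * min 1 (Real.sqrt ((b - a) / a)) := by
  have := hW.isProb
  refine ⟨5, by norm_num, fun M a b ha hab ↦ ?_⟩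
  set ε := √(b - a)
  have hE := (hW.inv_three_mul_measure_exists_eq_le ha.le hab le_rfl).trans
    (hW.measure_sub_mem_Icc_le le_rfl (ha.trans hab) (M - 2 * ε) (M + 2 * ε))
  rw [show M + 2 * ε - (M - 2 * ε) = 4 * ε by ring, sub_zero] at hE
  replace hE := ENNReal.toReal_le_of_le_ofReal (by positivity) hE
  rw [ENNReal.toReal_mul, ENNReal.toReal_inv, ENNReal.toReal_ofNat,
    Real.sqrt_mul (by positivity)] at hE
  have hbound : 3 * ((√(2 * π) * √b)⁻¹ * (4 * ε)) ≤ 5 * √((b - a) / a) := by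
    have hpi : 12 / 5 ≤ √(2 * π) := Real.le_sqrt_of_sq_le (by nlinarith [pi_gt_three])
    have hab' : 12 * √a ≤ 5 * (√(2 * π) * √b) := by
      nlinarith [Real.sqrt_le_sqrt hab.le, Real.sqrt_nonneg a]
    have hb : 0 < √b := Real.sqrt_pos.2 (ha.trans hab)
    rw [Real.sqrt_div' _ ha.le]
    field_simp
    nlinarith [Real.sqrt_nonneg (b - a)]
  rw [mul_min_of_nonneg _ _ (by norm_num : (0 : ℝ) ≤ 5), mul_one]
  exact le_min (measureReal_le_one.trans (by norm_num)) (by linarith)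
end DyadicPoint
end
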